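/- The VI-SLAM measurement function h is equivariant with respect to the actions φ and ρ: for all X ∈ G and ξ ∈ 𝒯, h(φ(X, ξ)) = ρ(X, h(ξ)). -/

import Mathlib

noncomputable section
open Matrix

abbrev Mat3 := Matrix (Fin 3) (Fin 3) ℝ
abbrev Vec3 := EuclideanSpace ℝ (Fin 3)
abbrev Vec6 := EuclideanSpace ℝ (Fin 6)

/-- Membership in `SO(3)`. -/
def SO3 (R : Mat3) : Prop := Rᵀ * R = 1 ∧ R.det = 1

/-- The standard gravity direction `e₃ = (0,0,1)`. -/
def e3 : Vec3 := WithLp.toLp 2 ![0, 0, 1]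

/-- Matrix-vector multiplication on `ℝ³`. -/
def mulv (M : Mat3) (v : Vec3) : Vec3 := WithLp.toLp 2 (M.mulVec v)

/-- `SE(3)` elements as (rotation, translation) pairs `(R_P, x_P)`. -/
abbrev SE3 := Mat3 × Vec3
def SE3.mul (P Q : SE3) : SE3 := (P.1 * Q.1, P.2 + mulv P.1 Q.2)
def SE3.one : SE3 := (1, 0)
def SE3.inv (P : SE3) : SE3 := (P.1ᵀ, -(mulv P.1ᵀ P.2))
/-- The action of `SE(3)` on `ℝ³`: `P p = R_P p + x_P`. -/
def SE3.act (P : SE3) (p : Vec3) : Vec3 := mulv P.1 p + P.2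

/-- Membership in `SE_{e₃}(3) := {(R,x) ∈ SE(3) | R e₃ = e₃}`. -/
def SEe3 (S : SE3) : Prop := SO3 S.1 ∧ mulv S.1 e3 = e3

/-- `SOT(3)` elements as pairs `(R_Q, c_Q)`. -/
abbrev SOT3 := Mat3 × ℝ
def SOT3.mem (Q : SOT3) : Prop := SO3 Q.1 ∧ 0 < Q.2
def SOT3.mul (Q₁ Q₂ : SOT3) : SOT3 := (Q₁.1 * Q₂.1, Q₁.2 * Q₂.2)
def SOT3.one : SOT3 := (1, 1)
def SOT3.inv (Q : SOT3) : SOT3 := (Q.1ᵀ, Q.2⁻¹)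
/-- The action of `SOT(3)` on `ℝ³`: `Q p = c_Q R_Q p`. -/
def SOT3.act (Q : SOT3) (p : Vec3) : Vec3 := Q.2 • mulv Q.1 p

/-- `SE₂(3)` elements as triples `(R_A, x_A, v_A)`. -/
abbrev SE23 := Mat3 × Vec3 × Vec3
def SE23.mem (A : SE23) : Prop := SO3 A.1
def SE23.mul (A₁ A₂ : SE23) : SE23 :=
  (A₁.1 * A₂.1, A₁.2.1 + mulv A₁.1 A₂.2.1, A₁.2.2 + mulv A₁.1 A₂.2.2)
def SE23.one : SE23 := (1, 0, 0)
/-- The pose component `P_A = (R_A, x_A)` of `A = (P_A, v_A) ∈ SE₂(3)`. -/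
def SE23.P (A : SE23) : SE3 := (A.1, A.2.1)

/-- A point of the ambient VI-SLAM state space with `n` landmarks. -/
structure VIState (n : ℕ) where
  P : SE3            -- pose of the IMU `(R_B, x_B)`
  v : Vec3           -- linear velocity `v_B`
  b : Vec6           -- IMU bias `b_B`
  T : SE3            -- camera extrinsics
  p : Fin n → Vec3   -- landmark positions

/-- Membership in the VI-SLAM total space `𝒯`. -/
def VIState.mem {n : ℕ} (ξ : VIState n) : Prop :=
  SO3 ξ.P.1 ∧ SO3 ξ.T.1 ∧ ∀ i, SE3.act (SE3.inv (SE3.mul ξ.P ξ.T)) (ξ.p i) ≠ 0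

/-- An element `X = (A, β, B, (Q_i))` of the group `G = SE₂(3) × ℝ⁶ × SE(3) × SOT(3)ⁿ`. -/
structure GElem (n : ℕ) where
  A : SE23
  β : Vec6
  B : SE3
  Q : Fin n → SOT3

def GElem.mem {n : ℕ} (X : GElem n) : Prop :=
  SE23.mem X.A ∧ SO3 X.B.1 ∧ ∀ i, SOT3.mem (X.Q i)

/-- Componentwise product on `G`. -/
def GElem.mul {n : ℕ} (X₁ X₂ : GElem n) : GElem n :=
  ⟨SE23.mul X₁.A X₂.A, X₁.β + X₂.β, SE3.mul X₁.B X₂.B, fun i => SOT3.mul (X₁.Q i) (X₂.Q i)⟩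

def GElem.one (n : ℕ) : GElem n := ⟨SE23.one, 0, SE3.one, fun _ => SOT3.one⟩

/-- The group action
`φ(X, ξ) := (φ^B(A, ξ_B), b_B + β, P_A⁻¹ T B, (P_B T B (Q_i⁻¹ ((P_B T)⁻¹ p_i))))`. -/
def phi {n : ℕ} (X : GElem n) (ξ : VIState n) : VIState n :=
  ⟨SE3.mul ξ.P (SE23.P X.A), ξ.v + mulv ξ.P.1 X.A.2.2, ξ.b + X.β,
   SE3.mul (SE3.mul (SE3.inv (SE23.P X.A)) ξ.T) X.B,
   fun i => SE3.act (SE3.mul (SE3.mul ξ.P ξ.T) X.B)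
     (SOT3.act (SOT3.inv (X.Q i)) (SE3.act (SE3.inv (SE3.mul ξ.P ξ.T)) (ξ.p i)))⟩

/-- The `k`-th component of the measurement function: `h^k(ξ) = q_k/|q_k|`
with `q_k = (P_B T)⁻¹ p_k`. -/
def hComp {n : ℕ} (ξ : VIState n) (k : Fin n) : Vec3 :=
  ‖SE3.act (SE3.inv (SE3.mul ξ.P ξ.T)) (ξ.p k)‖⁻¹ •
    SE3.act (SE3.inv (SE3.mul ξ.P ξ.T)) (ξ.p k)

/-- The full measurement function `h(ξ) = (h¹(ξ), …, hⁿ(ξ))`. -/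
def hMeas {n : ℕ} (ξ : VIState n) : Fin n → Vec3 := fun k => hComp ξ k

/-- The output action `ρ(X, (y_i)) := (R_{Q_i}ᵀ y_i)` of `G` on `(S²)ⁿ`. -/
def rho {n : ℕ} (X : GElem n) (y : Fin n → Vec3) : Fin n → Vec3 :=
  fun i => mulv (X.Q i).1ᵀ (y i)

/-! The camera frame `(P_B T)` of `φ(X, ξ)` is `P_B T B`, and `φ` moves the `i`-th landmark so
that its coordinates in this new frame are `Q_i⁻¹ q_i`. Since `Q_i⁻¹` acts by a positive scaling
composed with the rotation `R_{Q_i}ᵀ`, normalising removes the scaling and leaves `R_{Q_i}ᵀ` applied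
to the bearing `q_i / |q_i|`. -/

section Mulv

variable (M N : Mat3) (x y : Vec3)

@[simp] lemma mulv_add : mulv M (x + y) = mulv M x + mulv M y := by
  simp [mulv, Matrix.mulVec_add]

@[simp] lemma mulv_neg : mulv M (-x) = -mulv M x := by
  simp [mulv, Matrix.mulVec_neg]

@[simp] lemma mulv_smul (c : ℝ) : mulv M (c • x) = c • mulv M x := by
  simp [mulv, Matrix.mulVec_smul]

@[simp] lemma mulv_mulv : mulv M (mulv N x) = mulv (M * N) x := by
  simp [mulv, Matrix.mulVec_mulVec]

@[simp] lemma mulv_one : mulv 1 x = x := by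
  simp [mulv]

lemma norm_mulv_of_transpose_mul_self {M : Mat3} (hM : Mᵀ * M = 1) (v : Vec3) :
    ‖mulv M v‖ = ‖v‖ := by
  have hsq : ‖mulv M v‖ ^ 2 = ‖v‖ ^ 2 := by
    simp only [← real_inner_self_eq_norm_sq, EuclideanSpace.inner_eq_star_dotProduct, mulv,
      star_trivial]
    rw [Matrix.dotProduct_mulVec, ← Matrix.mulVec_transpose, Matrix.mulVec_mulVec, hM,
      Matrix.one_mulVec]
  exact (pow_left_inj₀ (norm_nonneg _) (norm_nonneg _) two_ne_zero).mp hsq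

end Mulv

lemma transpose_mul_self_mul {M N : Mat3} (hM : Mᵀ * M = 1) (hN : Nᵀ * N = 1) :
    (M * N)ᵀ * (M * N) = 1 := by
  rw [Matrix.transpose_mul, mul_assoc, ← mul_assoc Mᵀ, hM, one_mul, hN]

lemma transpose_transpose_mul_transpose {M : Mat3} (hM : Mᵀ * M = 1) : Mᵀᵀ * Mᵀ = 1 := by
  rw [Matrix.transpose_transpose]
  exact mul_eq_one_comm.mp hM

namespace SE3

lemma mul_assoc (P Q S : SE3) : mul (mul P Q) S = mul P (mul Q S) := by
  refine Prod.ext (Matrix.mul_assoc _ _ _) ?_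
  simp only [mul, mulv_add, mulv_mulv, add_assoc]

lemma one_mul (P : SE3) : mul one P = P := by
  simp [mul, one]

lemma mul_inv_cancel {P : SE3} (hP : P.1ᵀ * P.1 = 1) : mul P (inv P) = one := by
  have hP' : P.1 * P.1ᵀ = 1 := mul_eq_one_comm.mp hP
  refine Prod.ext hP' ?_
  simp [mul, inv, one, hP']

lemma inv_mul_cancel {P : SE3} (hP : P.1ᵀ * P.1 = 1) : mul (inv P) P = one := by
  refine Prod.ext hP ?_
  simp [mul, inv, one]

lemma act_mul (P Q : SE3) (p : Vec3) : act (mul P Q) p = act P (act Q p) := by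
  simp only [act, mul, mulv_add, mulv_mulv]
  abel

lemma act_one (p : Vec3) : act one p = p := by
  simp [act, one]

lemma act_inv_act {P : SE3} (hP : P.1ᵀ * P.1 = 1) (p : Vec3) : act (inv P) (act P p) = p := by
  rw [← act_mul, inv_mul_cancel hP, act_one]

end SE3

namespace SOT3

lemma norm_act {Q : SOT3} (hR : Q.1ᵀ * Q.1 = 1) (p : Vec3) : ‖act Q p‖ = |Q.2| * ‖p‖ := by
  rw [act, norm_smul, Real.norm_eq_abs, norm_mulv_of_transpose_mul_self hR]

lemma inv_norm_smul_act {Q : SOT3} (hR : Q.1ᵀ * Q.1 = 1) (hc : 0 < Q.2) (p : Vec3) :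
    ‖act Q p‖⁻¹ • act Q p = mulv Q.1 (‖p‖⁻¹ • p) := by
  rw [norm_act hR, abs_of_pos hc, act, smul_smul, mul_inv, mul_right_comm,
    inv_mul_cancel₀ hc.ne', one_mul, mulv_smul]

end SOT3

/-- The landmark `q_k = (P_B T)⁻¹ p_k` in camera coordinates. -/
def VIState.cameraLandmark {n : ℕ} (ξ : VIState n) (k : Fin n) : Vec3 :=
  SE3.act (SE3.inv (SE3.mul ξ.P ξ.T)) (ξ.p k)

lemma hComp_eq {n : ℕ} (ξ : VIState n) (k : Fin n) :
    hComp ξ k = ‖ξ.cameraLandmark k‖⁻¹ • ξ.cameraLandmark k :=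
  rfl

lemma phi_camera_pose {n : ℕ} (X : GElem n) (ξ : VIState n) (hA : X.A.1ᵀ * X.A.1 = 1) :
    SE3.mul (phi X ξ).P (phi X ξ).T = SE3.mul (SE3.mul ξ.P ξ.T) X.B := by
  change SE3.mul (SE3.mul ξ.P (SE23.P X.A)) (SE3.mul (SE3.mul (SE3.inv (SE23.P X.A)) ξ.T) X.B) = _
  rw [SE3.mul_assoc ξ.P, ← SE3.mul_assoc (SE23.P X.A), ← SE3.mul_assoc (SE23.P X.A),
    SE3.mul_inv_cancel hA, SE3.one_mul, ← SE3.mul_assoc]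

lemma phi_cameraLandmark {n : ℕ} (X : GElem n) (ξ : VIState n) (hA : X.A.1ᵀ * X.A.1 = 1)
    (hB : X.B.1ᵀ * X.B.1 = 1) (hP : ξ.P.1ᵀ * ξ.P.1 = 1) (hT : ξ.T.1ᵀ * ξ.T.1 = 1) (k : Fin n) :
    (phi X ξ).cameraLandmark k = SOT3.act (SOT3.inv (X.Q k)) (ξ.cameraLandmark k) := by
  rw [VIState.cameraLandmark, phi_camera_pose X ξ hA]
  exact SE3.act_inv_act (transpose_mul_self_mul (transpose_mul_self_mul hP hT) hB) _

theorem h_equivariant_general (n : ℕ) (X : GElem n) (ξ : VIState n)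
    (hX : X.mem) (hξ : ξ.mem) :
    hMeas (phi X ξ) = rho X (hMeas ξ) := by
  obtain ⟨⟨hA, -⟩, ⟨hB, -⟩, hQ⟩ := hX
  obtain ⟨⟨hP, -⟩, ⟨hT, -⟩, -⟩ := hξ
  funext k
  obtain ⟨⟨hR, -⟩, hc⟩ := hQ k
  rw [hMeas, hComp_eq, phi_cameraLandmark X ξ hA hB hP hT k]
  exact SOT3.inv_norm_smul_act (transpose_transpose_mul_transpose hR) (inv_pos.mpr hc) _

/-- The VI-SLAM measurement function `h` is equivariant with respect to
the actions `φ` and `ρ`: `h(φ(X, ξ)) = ρ(X, h(ξ))` for all `X ∈ G` and `ξ ∈ 𝒯`. -/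
theorem h_equivariant (n : ℕ) (hn : 1 ≤ n) (X : GElem n) (ξ : VIState n)
    (hX : X.mem) (hξ : ξ.mem) :
    hMeas (phi X ξ) = rho X (hMeas ξ) :=
  h_equivariant_general n X ξ hX hξ
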